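/- arXiv:1906.06611 — 2 statements merged into one kernel-verified Lean document; each statement's English description precedes it below -/
import Mathlib

section
/- Gauss-Bonnet from index expectation: Let G=(V,E) be a finite simple graph and let g be a random function on V with i.i.d. uniform values in [0,1]. Then for each vertex x and each k ≥ 0, the expected number of k-dimensional cliques in S_g(x) equals f_k(S(x))/(k+1), and consequently E[t·f_{S_g(x)}(t)] = F_{S(x)}(t), where F is the antiderivative of f with F(0)=0. -/
open Finset MeasureTheory
open scoped Classical

/-- The f-polynomial of a finite simple graph. -/
noncomputable def fPoly {V : Type*} [Fintype V] (G : SimpleGraph V) (t : ℝ) : ℝ :=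
  1 + ∑ k ∈ Finset.range (Fintype.card V), ((G.cliqueFinset (k + 1)).card : ℝ) * t ^ (k + 1)

/-- The antiderivative `F_G(t) = ∫₀ᵗ f_G(s) ds = t + Σ_k f_k t^{k+2}/(k+2)`. -/
noncomputable def FPoly {V : Type*} [Fintype V] (G : SimpleGraph V) (t : ℝ) : ℝ :=
  t + ∑ k ∈ Finset.range (Fintype.card V),
    ((G.cliqueFinset (k + 1)).card : ℝ) * t ^ (k + 2) / (k + 2)

/-- The part of the unit sphere of `x` where `g` is smaller than `g x`. -/
def sphereSet {V : Type*} (G : SimpleGraph V) (g : V → ℝ) (x : V) : Set V :=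
  {y | G.Adj x y ∧ g y < g x}

/-- The sub-level unit sphere `S_g(x)` as an induced subgraph. -/
def sphereBelow {V : Type*} (G : SimpleGraph V) (g : V → ℝ) (x : V) :
    SimpleGraph (sphereSet G g x) :=
  G.induce (sphereSet G g x)

/-- The unit sphere `S(x)`: the induced subgraph on the neighbors of `x`. -/
def unitSphere {V : Type*} (G : SimpleGraph V) (x : V) : SimpleGraph (G.neighborSet x) :=
  G.induce (G.neighborSet x)

/-! The number of `(k+1)`-cliques of `S_g(x)` is the sum, over the `(k+1)`-cliques `t` of `S(x)`,
of the indicator that `g < g x` on `t`. Integrating first over the coordinates `g y`, `y ≠ x`,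
and then over `c = g x`, that event has probability `∫₀¹ c ^ (k+1) dc = 1/(k+2)`. Linearity of
the expectation then gives the clique counts, and integrating `t · f_{S_g(x)}(t)` term by term
gives `F_{S(x)}(t)`. -/

namespace SimpleGraph

variable {α : Type*} [Fintype α] [DecidableEq α] (G : SimpleGraph α) [DecidableRel G.Adj]

theorem map_cliqueFinset_induce (s : Set α) [DecidablePred (· ∈ s)] (n : ℕ) :
    ((G.induce s).cliqueFinset n).map (mapEmbedding (.subtype (· ∈ s))).toEmbedding =
      {t ∈ G.cliqueFinset n | ↑t ⊆ s} := by
  ext t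
  simp only [mem_map, mem_cliqueFinset_iff, isNClique_induce_iff, mem_filter,
    RelEmbedding.coe_toEmbedding, mapEmbedding_apply]
  constructor
  · rintro ⟨t, ht, rfl⟩
    refine ⟨ht, fun y hy => ?_⟩
    obtain ⟨y, -, rfl⟩ := mem_map.mp hy
    exact y.2
  · rintro ⟨ht, hts⟩
    have hmap : (t.subtype (· ∈ s)).map (.subtype _) = t := subtype_map_of_mem fun y hy => hts hy
    exact ⟨t.subtype (· ∈ s), by rwa [hmap], hmap⟩

theorem card_cliqueFinset_induce (s : Set α) [DecidablePred (· ∈ s)] (n : ℕ) :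
    #((G.induce s).cliqueFinset n) = #{t ∈ G.cliqueFinset n | ↑t ⊆ s} := by
  rw [← map_cliqueFinset_induce, card_map]

end SimpleGraph

section Spheres

variable {V : Type*} [Fintype V] (G : SimpleGraph V) (x : V)

theorem card_cliqueFinset_unitSphere (n : ℕ) :
    #((unitSphere G x).cliqueFinset n) = #{t ∈ G.cliqueFinset n | ↑t ⊆ G.neighborSet x} :=
  G.card_cliqueFinset_induce _ n

theorem card_cliqueFinset_sphereBelow (g : V → ℝ) (n : ℕ) :
    #((sphereBelow G g x).cliqueFinset n) =
      #{t ∈ {t ∈ G.cliqueFinset n | ↑t ⊆ G.neighborSet x} | ∀ y ∈ t, g y < g x} := by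
  refine (G.card_cliqueFinset_induce _ n).trans ?_
  rw [filter_filter]
  congr! 3 with t
  simp only [sphereSet, Set.subset_def, Finset.mem_coe, Set.mem_ofPred_eq,
    SimpleGraph.mem_neighborSet]
  exact forall₂_and

end Spheres

section CountingIntegral

variable {Ω ι : Type*} (s : Finset ι) {P : ι → Ω → Prop} [∀ i ω, Decidable (P i ω)]

theorem natCast_card_filter_eq_sum_indicator (ω : Ω) :
    (#{i ∈ s | P i ω} : ℝ) = ∑ i ∈ s, {ω | P i ω}.indicator 1 ω := by
  simp only [natCast_card_filter, Set.indicator_apply, Set.mem_ofPred_eq, Pi.one_apply]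

variable [MeasurableSpace Ω] {μ : Measure Ω} [IsFiniteMeasure μ] {s}

theorem integrable_card_filter (hP : ∀ i ∈ s, MeasurableSet {ω | P i ω}) :
    Integrable (fun ω => (#{i ∈ s | P i ω} : ℝ)) μ := by
  simp only [natCast_card_filter_eq_sum_indicator]
  exact integrable_finsetSum _ fun i hi => (integrable_indicator_iff (hP i hi)).2 integrableOn_const

theorem integral_card_filter (hP : ∀ i ∈ s, MeasurableSet {ω | P i ω}) :
    ∫ ω, (#{i ∈ s | P i ω} : ℝ) ∂μ = ∑ i ∈ s, μ.real {ω | P i ω} := by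
  simp only [natCast_card_filter_eq_sum_indicator]
  rw [integral_finsetSum _ fun i hi => (integrable_indicator_iff (hP i hi)).2 integrableOn_const]
  exact sum_congr rfl fun i hi => integral_indicator_one (hP i hi)

end CountingIntegral

theorem measurableSet_setOf_forall_lt {V : Type*} (x : V) (u : Finset V) :
    MeasurableSet {g : V → ℝ | ∀ y ∈ u, g y < g x} := by
  simp only [Set.ofPred_forall]
  exact u.measurableSet_biInter fun y _ =>
    measurableSet_lt (measurable_pi_apply y) (measurable_pi_apply x)

theorem pi_setOf_forall_lt_eq_lintegral {V : Type*} [Fintype V] (ν : Measure ℝ)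
    [IsProbabilityMeasure ν] {x : V} {u : Finset V} (hx : x ∉ u) :
    Measure.pi (fun _ : V => ν) {g | ∀ y ∈ u, g y < g x} = ∫⁻ c, ν (Set.Iio c) ^ #u ∂ν := by
  -- Split `g` into `g x` and the other coordinates; for `g x = c` the event is a box.
  let e := MeasurableEquiv.piEquivPiSubtypeProd (fun _ : V => ℝ) (· = x)
  let B : Set (({i // i = x} → ℝ) × ({i // i ≠ x} → ℝ)) :=
    {ab | ab.2 ∈ Set.univ.pi fun y => if ↑y ∈ u then Set.Iio (ab.1 ⟨x, rfl⟩) else Set.univ}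
  have hB : MeasurableSet B := by measurability
  have hA : {g : V → ℝ | ∀ y ∈ u, g y < g x} = e ⁻¹' B := by
    ext g
    simp only [Set.mem_ofPred_eq, MeasurableEquiv.piEquivPiSubtypeProd_apply, Set.mem_pi,
      Set.mem_univ, Set.mem_ite_univ_right, Set.mem_Iio, forall_const, Subtype.forall,
      Set.preimage_ofPred_eq, e, B]
    exact ⟨fun h y _ hy => h y hy, fun h y hy => h y (ne_of_mem_of_not_mem hy hx) hy⟩
  have hcard : #{y : {i // i ≠ x} | ↑y ∈ u} = #u := by
    rw [← card_map (.subtype _)]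
    congr
    ext y
    simpa using fun hy => ne_of_mem_of_not_mem hy hx
  have hslice (c : ℝ) :
      ∏ y : {i // i ≠ x}, ν (if ↑y ∈ u then Set.Iio c else Set.univ) = ν (Set.Iio c) ^ #u := by
    simp only [apply_ite ν, measure_univ]
    rw [prod_ite, prod_const_one, mul_one, prod_const, hcard]
  have hmono : Measurable fun c : ℝ => ν (Set.Iio c) ^ #u :=
    (Monotone.measurable fun _ _ h => measure_mono (Set.Iio_subset_Iio h)).pow_const _
  rw [hA, (measurePreserving_piEquivPiSubtypeProd _ _).measure_preimage hB.nullMeasurableSet,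
    Measure.prod_apply hB]
  simp only [B, Set.preimage_ofPred_eq, Set.ofPred_mem_eq, Measure.pi_pi, hslice]
  convert (measurePreserving_eval (fun _ : {i // i = x} => ν) ⟨x, rfl⟩).lintegral_comp hmono

instance isProbabilityMeasure_restrict_Icc_zero_one :
    IsProbabilityMeasure (volume.restrict (Set.Icc (0 : ℝ) 1)) :=
  ⟨by simp [Real.volume_Icc]⟩

theorem restrict_Icc_zero_one_Iio {c : ℝ} (hc : c ∈ Set.Icc (0 : ℝ) 1) :
    volume.restrict (Set.Icc (0 : ℝ) 1) (Set.Iio c) = ENNReal.ofReal c := by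
  have : Set.Iio c ∩ Set.Icc 0 1 = Set.Ico 0 c := by
    ext z
    simp only [Set.mem_inter_iff, Set.mem_Iio, Set.mem_Icc, Set.mem_Ico]
    constructor
    · exact fun h => ⟨h.2.1, h.1⟩
    · exact fun h => ⟨h.2, h.1, by linarith [hc.2]⟩
  rw [Measure.restrict_apply measurableSet_Iio, this, Real.volume_Ico, sub_zero]

theorem lintegral_restrict_Icc_zero_one_Iio_pow (n : ℕ) :
    ∫⁻ c, volume.restrict (Set.Icc (0 : ℝ) 1) (Set.Iio c) ^ n ∂volume.restrict (Set.Icc 0 1) =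
      ENNReal.ofReal (1 / (n + 1)) := by
  calc ∫⁻ c, volume.restrict (Set.Icc (0 : ℝ) 1) (Set.Iio c) ^ n ∂volume.restrict (Set.Icc 0 1)
      = ∫⁻ c in Set.Icc 0 1, ENNReal.ofReal (c ^ n) :=
        setLIntegral_congr_fun measurableSet_Icc fun c hc => by
          rw [restrict_Icc_zero_one_Iio hc, ENNReal.ofReal_pow hc.1]
    _ = ENNReal.ofReal (∫ c in (0 : ℝ)..1, c ^ n) := by
        rw [intervalIntegral.integral_of_le zero_le_one, ← integral_Icc_eq_integral_Ioc,
          ofReal_integral_eq_lintegral_ofReal (continuous_pow n).integrableOn_Icc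
            ((ae_restrict_mem measurableSet_Icc).mono fun c hc => pow_nonneg hc.1 n)]
    _ = ENNReal.ofReal (1 / (n + 1)) := by simp [integral_pow]

theorem measureReal_pi_Icc_setOf_forall_lt {V : Type*} [Fintype V] {x : V} {u : Finset V}
    (hx : x ∉ u) :
    (Measure.pi fun _ : V => volume.restrict (Set.Icc (0 : ℝ) 1)).real
      {g | ∀ y ∈ u, g y < g x} = 1 / (#u + 1) := by
  rw [measureReal_def, pi_setOf_forall_lt_eq_lintegral _ hx,
    lintegral_restrict_Icc_zero_one_Iio_pow, ENNReal.toReal_ofReal (by positivity)]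

section Polynomials

variable {W : Type*} [Fintype W] (H : SimpleGraph W) [DecidableEq W] [DecidableRel H.Adj]
  {m : ℕ} (hm : Fintype.card W ≤ m)
include hm

theorem sum_range_card_cliqueFinset_of_card_le (f : ℕ → ℝ) :
    ∑ k ∈ range (Fintype.card W), #(H.cliqueFinset (k + 1)) * f k =
      ∑ k ∈ range m, #(H.cliqueFinset (k + 1)) * f k := by
  refine sum_subset (range_subset_range.2 hm) fun k _ hk => ?_
  rw [H.cliqueFinset_eq_empty_iff.2 (H.cliqueFree_of_card_lt (by simp at hk; omega))]
  simp

theorem mul_fPoly_eq_of_card_le (t : ℝ) :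
    t * fPoly H t = t + ∑ k ∈ range m, #(H.cliqueFinset (k + 1)) * t ^ (k + 2) := by
  rw [fPoly, mul_add, mul_one, mul_sum, ← sum_range_card_cliqueFinset_of_card_le H hm]
  refine congrArg (t + ·) (sum_congr rfl fun k _ => ?_)
  rw [mul_left_comm, ← pow_succ']
  congr!

theorem FPoly_eq_of_card_le (t : ℝ) :
    FPoly H t = t + ∑ k ∈ range m, #(H.cliqueFinset (k + 1)) * (t ^ (k + 2) / (k + 2)) := by
  rw [← sum_range_card_cliqueFinset_of_card_le H hm]
  simp only [FPoly, mul_div_assoc]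
  congr!

end Polynomials

section IndexExpectation

variable {V : Type*} [Fintype V] (G : SimpleGraph V) (x : V)

theorem integrable_card_cliqueFinset_sphereBelow (μ : Measure (V → ℝ)) [IsFiniteMeasure μ]
    (n : ℕ) : Integrable (fun g => (#((sphereBelow G g x).cliqueFinset n) : ℝ)) μ := by
  simp only [card_cliqueFinset_sphereBelow]
  exact integrable_card_filter fun t _ => measurableSet_setOf_forall_lt x t

theorem integral_card_cliqueFinset_sphereBelow (k : ℕ) :
    ∫ g, (#((sphereBelow G g x).cliqueFinset (k + 1)) : ℝ)
        ∂Measure.pi (fun _ : V => volume.restrict (Set.Icc (0 : ℝ) 1)) =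
      #((unitSphere G x).cliqueFinset (k + 1)) / (k + 2) := by
  have hprob : ∀ t ∈ {t ∈ G.cliqueFinset (k + 1) | ↑t ⊆ G.neighborSet x},
      (Measure.pi fun _ : V => volume.restrict (Set.Icc (0 : ℝ) 1)).real
        {g | ∀ y ∈ t, g y < g x} = 1 / (k + 2) := by
    intro t ht
    obtain ⟨htk, htx⟩ := mem_filter.1 ht
    have hxt : x ∉ t := fun hx => G.irrefl (htx hx)
    rw [measureReal_pi_Icc_setOf_forall_lt hxt, (G.mem_cliqueFinset_iff.1 htk).card_eq]
    push_cast
    ring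
  simp only [card_cliqueFinset_sphereBelow]
  rw [integral_card_filter fun t _ => measurableSet_setOf_forall_lt x t, sum_congr rfl hprob,
    sum_const, card_cliqueFinset_unitSphere, nsmul_eq_mul]
  ring

theorem integral_mul_fPoly_sphereBelow (t : ℝ) :
    ∫ g, t * fPoly (sphereBelow G g x) t
        ∂Measure.pi (fun _ : V => volume.restrict (Set.Icc (0 : ℝ) 1)) =
      FPoly (unitSphere G x) t := by
  have hint (k : ℕ) := (integrable_card_cliqueFinset_sphereBelow G x
    (Measure.pi fun _ : V => volume.restrict (Set.Icc (0 : ℝ) 1)) (k + 1)).mul_const (t ^ (k + 2))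
  simp only [mul_fPoly_eq_of_card_le _ (Fintype.card_subtype_le _) t]
  rw [FPoly_eq_of_card_le _ (Fintype.card_subtype_le _) t,
    integral_add (integrable_const t) (integrable_finsetSum _ fun k _ => hint k),
    integral_finsetSum _ fun k _ => hint k]
  simp only [integral_const, probReal_univ, one_smul, integral_mul_const,
    integral_card_cliqueFinset_sphereBelow]
  exact congrArg (t + ·) (sum_congr rfl fun k _ => by ring)

end IndexExpectation

/-- Index expectation with i.i.d. uniform values on `[0,1]`: the expected number of cliques
of `S_g(x)` on `k+1` vertices (i.e. `k`-dimensional cliques) is `f_k(S(x))/(k+2)` — since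
`g(x)` is the maximum of the `k+2` i.i.d. values on the clique together with `x` with
probability `1/(k+2)` — and consequently `E[t·f_{S_g(x)}(t)] = F_{S(x)}(t)`. -/
theorem index_expectation_uniform {V : Type*} [Fintype V] (G : SimpleGraph V) :
    let μ : Measure (V → ℝ) :=
      Measure.pi (fun _ : V => volume.restrict (Set.Icc (0 : ℝ) 1))
    ∀ x : V,
      (∀ k : ℕ,
        ∫ g : V → ℝ, (((sphereBelow G g x).cliqueFinset (k + 1)).card : ℝ) ∂μ
          = (((unitSphere G x).cliqueFinset (k + 1)).card : ℝ) / (k + 2))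
      ∧ (∀ t : ℝ,
        ∫ g : V → ℝ, t * fPoly (sphereBelow G g x) t ∂μ = FPoly (unitSphere G x) t) :=
  fun x => ⟨integral_card_cliqueFinset_sphereBelow G x, integral_mul_fPoly_sphereBelow G x⟩
end

section
/- Evaluation at (t,s)=(-1,-1) of the intersection generating function gives the Wu intersection number: ω(G,H) = -f_{G,H}(-1,-1) = Σ_{x⊂G, y⊂H, x∩y≠∅} (-1)^{dim(x)+dim(y)}, and the localization formula yields the Poincaré-Hopf formula ω(G,H) = Σ_{v,w} i_g(v,w) with i_g(v,w) = ω(B_g(v),B_g(w)) - ω(B_g(v),S_g(w)) - ω(S_g(v),B_g(w)) + ω(S_g(v),S_g(w)). -/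
/-!
For a clique `x` of `A`, the weight `[x ⊆ B_g(v)] - [x ⊆ S_g(v)]` vanishes unless `v ∈ x`, and
then it is `1` exactly when `g` takes its maximum over `x` at `v`; local injectivity of `g` makes
that vertex unique. So summing the weight over `v` gives `1` for every nonempty clique. Since
`f_{A,B}` is bilinear in the indicators of `x ⊆ sA` and `y ⊆ sB`, and only pairs of nonempty
cliques intersect, summing the alternating combination of the four localized generating
functions over `(v, w)` recovers `f_{A,B}`; at `(t,s) = (-1,-1)` this is Poincaré–Hopf for `ω`.
-/

open Finset
open scoped Classical

/-- The intersection generating function of cliques of `A` inside `sA` and cliques of `B`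
inside `sB`: `Σ t^{|x|} s^{|y|}` over pairs of intersecting cliques. -/
noncomputable def fInt {V : Type*} [Fintype V] (A B : SimpleGraph V) (sA sB : Set V)
    (t s : ℝ) : ℝ :=
  ∑ x ∈ Finset.univ.filter (fun x : Finset V => A.IsClique (x : Set V) ∧ ↑x ⊆ sA),
    ∑ y ∈ Finset.univ.filter (fun y : Finset V => B.IsClique (y : Set V) ∧ ↑y ⊆ sB),
      if (x ∩ y).Nonempty then t ^ x.card * s ^ y.card else 0

/-- The Wu intersection number `ω(A,B)`: the value of the intersection generating
function at `(t,s) = (-1,-1)`. -/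
noncomputable def wu {V : Type*} [Fintype V] (A B : SimpleGraph V) (sA sB : Set V) : ℝ :=
  fInt A B sA sB (-1) (-1)

/-- The sub-level sphere of `v`. -/
def sphSet {V : Type*} (A : SimpleGraph V) (g : V → ℝ) (v : V) : Set V :=
  {u | A.Adj v u ∧ g u < g v}

/-- The sub-level ball `B_g(v) = S_g(v) ∪ {v}`. -/
def ballSet {V : Type*} (A : SimpleGraph V) (g : V → ℝ) (v : V) : Set V :=
  insert v (sphSet A g v)

section Localization

variable {V : Type*}

theorem neg_one_pow_mul_neg_one_pow_pred {R : Type*} [Monoid R] [HasDistribNeg R] {m n : ℕ}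
    (hm : 0 < m) (hn : 0 < n) :
    (-1 : R) ^ m * (-1 : R) ^ n = (-1 : R) ^ (m - 1) * (-1 : R) ^ (n - 1) := by
  obtain ⟨m, rfl⟩ := Nat.exists_eq_add_one_of_ne_zero hm.ne'
  obtain ⟨n, rfl⟩ := Nat.exists_eq_add_one_of_ne_zero hn.ne'
  simp [pow_succ]

theorem fInt_eq_sum_cliques [Fintype V] (A B : SimpleGraph V) (sA sB : Set V) (t s : ℝ) :
    fInt A B sA sB t s =
      ∑ x ∈ Finset.univ.filter (fun x : Finset V => A.IsClique (x : Set V)),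
        ∑ y ∈ Finset.univ.filter (fun y : Finset V => B.IsClique (y : Set V)),
          (if (x : Set V) ⊆ sA then 1 else 0) * (if (y : Set V) ⊆ sB then 1 else 0) *
            (if (x ∩ y).Nonempty then t ^ x.card * s ^ y.card else 0) := by
  rw [fInt, ← Finset.filter_filter, Finset.sum_filter]
  refine Finset.sum_congr rfl fun x _ => ?_
  rw [← Finset.filter_filter, Finset.sum_filter]
  by_cases hx : (x : Set V) ⊆ sA
  · rw [if_pos hx]
    refine Finset.sum_congr rfl fun y _ => ?_
    by_cases hy : (y : Set V) ⊆ sB <;> simp [hx, hy]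
  · simp [hx]

noncomputable def ballSphIndicator (A : SimpleGraph V) (g : V → ℝ) (v : V) (x : Finset V) : ℝ :=
  (if (x : Set V) ⊆ ballSet A g v then 1 else 0) - (if (x : Set V) ⊆ sphSet A g v then 1 else 0)

theorem ballSphIndicator_eq_ite (A : SimpleGraph V) (g : V → ℝ) (v : V) (x : Finset V) :
    ballSphIndicator A g v x = if v ∈ x ∧ (x : Set V) ⊆ ballSet A g v then 1 else 0 := by
  by_cases hv : v ∈ x
  · have hsph : ¬ (x : Set V) ⊆ sphSet A g v := fun h => A.irrefl (h hv).1
    simp [ballSphIndicator, hv, hsph]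
  · simp [ballSphIndicator, hv, ballSet,
      Set.subset_insert_iff_of_notMem (Finset.mem_coe.not.mpr hv)]

theorem filter_subset_ballSet_eq_singleton (A : SimpleGraph V) (g : V → ℝ)
    (hg : ∀ ⦃a b : V⦄, A.Adj a b → g a ≠ g b) {x : Finset V} (hx : A.IsClique (x : Set V))
    {m : V} (hm : m ∈ x) (hmax : ∀ u ∈ x, g u ≤ g m) :
    x.filter (fun v => (x : Set V) ⊆ ballSet A g v) = {m} := by
  refine Finset.eq_singleton_iff_unique_mem.mpr ⟨Finset.mem_filter.mpr ⟨hm, ?_⟩, ?_⟩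
  · intro u hu
    rcases eq_or_ne u m with rfl | hum
    · exact Set.mem_insert _ _
    · have hadj : A.Adj m u := hx hm hu hum.symm
      exact Set.mem_insert_of_mem _ ⟨hadj, (hmax u hu).lt_of_ne (hg hadj).symm⟩
  · intro v hv
    obtain ⟨hvx, hball⟩ := Finset.mem_filter.mp hv
    rcases hball (Finset.mem_coe.mpr hm) with hmv | ⟨-, hlt⟩
    · exact hmv.symm
    · exact absurd (hmax v hvx) hlt.not_ge

theorem sum_ballSphIndicator [Fintype V] (A : SimpleGraph V) (g : V → ℝ)
    (hg : ∀ ⦃a b : V⦄, A.Adj a b → g a ≠ g b) {x : Finset V} (hx : A.IsClique (x : Set V))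
    (hne : x.Nonempty) :
    ∑ v : V, ballSphIndicator A g v x = 1 := by
  obtain ⟨m, hm, hmax⟩ := x.exists_max_image g hne
  simp_rw [ballSphIndicator_eq_ite, Finset.sum_boole, ← Finset.filter_filter,
    Finset.filter_mem_eq_inter, Finset.univ_inter,
    filter_subset_ballSet_eq_singleton A g hg hx hm hmax, Finset.card_singleton, Nat.cast_one]

theorem sum_sum_sum_sum_mul_mul {α β γ δ R : Type*} [CommSemiring R] (s : Finset α)
    (t : Finset β) (u : Finset γ) (w : Finset δ) (a : α → γ → R) (b : β → δ → R)
    (F : γ → δ → R) :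
    ∑ i ∈ s, ∑ j ∈ t, ∑ x ∈ u, ∑ y ∈ w, a i x * b j y * F x y =
      ∑ x ∈ u, ∑ y ∈ w, (∑ i ∈ s, a i x) * (∑ j ∈ t, b j y) * F x y := by
  simp only [Finset.sum_mul_sum]
  simp only [Finset.sum_mul]
  simp_rw [← Finset.sum_product' s t, ← Finset.sum_product' u w]
  exact Finset.sum_comm

theorem fInt_univ_eq_sum_ballSet_sphSet [Fintype V] (A B : SimpleGraph V) (g : V → ℝ)
    (hgA : ∀ ⦃a b : V⦄, A.Adj a b → g a ≠ g b) (hgB : ∀ ⦃a b : V⦄, B.Adj a b → g a ≠ g b)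
    (t s : ℝ) :
    fInt A B Set.univ Set.univ t s =
      ∑ v : V, ∑ w : V,
        (fInt A B (ballSet A g v) (ballSet B g w) t s - fInt A B (ballSet A g v) (sphSet B g w) t s
          - fInt A B (sphSet A g v) (ballSet B g w) t s
          + fInt A B (sphSet A g v) (sphSet B g w) t s) := by
  have hexpand : ∀ v w, fInt A B (ballSet A g v) (ballSet B g w) t s
      - fInt A B (ballSet A g v) (sphSet B g w) t s - fInt A B (sphSet A g v) (ballSet B g w) t s
      + fInt A B (sphSet A g v) (sphSet B g w) t s =
        ∑ x ∈ Finset.univ.filter (fun x : Finset V => A.IsClique (x : Set V)),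
          ∑ y ∈ Finset.univ.filter (fun y : Finset V => B.IsClique (y : Set V)),
            ballSphIndicator A g v x * ballSphIndicator B g w y *
              (if (x ∩ y).Nonempty then t ^ x.card * s ^ y.card else 0) := by
    intro v w
    simp only [fInt_eq_sum_cliques, ← Finset.sum_sub_distrib, ← Finset.sum_add_distrib]
    refine Finset.sum_congr rfl fun x _ => Finset.sum_congr rfl fun y _ => ?_
    rw [ballSphIndicator, ballSphIndicator]
    ring
  simp_rw [hexpand, sum_sum_sum_sum_mul_mul, fInt_eq_sum_cliques, Set.subset_univ, if_true,
    one_mul]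
  refine Finset.sum_congr rfl fun x hx => Finset.sum_congr rfl fun y hy => ?_
  split_ifs with hxy
  · rw [sum_ballSphIndicator A g hgA (Finset.mem_filter.mp hx).2 (hxy.mono inter_subset_left),
      sum_ballSphIndicator B g hgB (Finset.mem_filter.mp hy).2 (hxy.mono inter_subset_right),
      one_mul, one_mul]
  · rw [mul_zero]

end Localization

/-- Evaluation at `(t,s)=(-1,-1)`: the Wu intersection number is
`ω(G,H) = Σ_{x⊂G, y⊂H, x∩y≠∅} (-1)^{dim x + dim y}` (with `dim x = |x| - 1`), and
Poincaré–Hopf for the Wu characteristic: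
`ω(G,H) = Σ_{v,w} i_g(v,w)` with
`i_g(v,w) = ω(B_g(v),B_g(w)) - ω(B_g(v),S_g(w)) - ω(S_g(v),B_g(w)) + ω(S_g(v),S_g(w))`. -/
theorem wu_poincare_hopf {V : Type*} [Fintype V] (G H : SimpleGraph V) (g : V → ℝ)
    (hgG : ∀ ⦃a b : V⦄, G.Adj a b → g a ≠ g b)
    (hgH : ∀ ⦃a b : V⦄, H.Adj a b → g a ≠ g b) :
    (wu G H Set.univ Set.univ =
      ∑ x ∈ Finset.univ.filter (fun x : Finset V => G.IsClique (x : Set V)),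
        ∑ y ∈ Finset.univ.filter (fun y : Finset V => H.IsClique (y : Set V)),
          if (x ∩ y).Nonempty then
            (-1 : ℝ) ^ (x.card - 1) * (-1 : ℝ) ^ (y.card - 1) else 0)
    ∧ wu G H Set.univ Set.univ =
        ∑ v : V, ∑ w : V,
          (wu G H (ballSet G g v) (ballSet H g w)
           - wu G H (ballSet G g v) (sphSet H g w)
           - wu G H (sphSet G g v) (ballSet H g w)
           + wu G H (sphSet G g v) (sphSet H g w)) := by
  refine ⟨?_, fInt_univ_eq_sum_ballSet_sphSet G H g hgG hgH (-1) (-1)⟩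
  rw [wu, fInt_eq_sum_cliques]
  refine Finset.sum_congr rfl fun x _ => Finset.sum_congr rfl fun y _ => ?_
  simp only [Set.subset_univ, if_true, one_mul]
  split_ifs with hxy
  · exact neg_one_pow_mul_neg_one_pow_pred (Finset.card_pos.mpr (hxy.mono inter_subset_left))
      (Finset.card_pos.mpr (hxy.mono inter_subset_right))
  · rfl
end
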